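/- For N = 4 and 0 < γ < 1, the points A(γ) = √(1-γ)·(1,1,-1,-1) and B(γ) = √(1-γ)·(1,0,-1,0) are stationary points of V_γ, with V_γ(A) = -(1-γ)² and V_γ(A) < V_γ(B). -/

import Mathlib

open scoped BigOperators
open Real

/-- The potential `V_γ` on `ℝ^N` with periodic boundary conditions. -/
noncomputable def V (N : ℕ) [NeZero N] (γ : ℝ) (x : EuclideanSpace ℝ (ZMod N)) : ℝ :=
  ∑ i : ZMod N, ((x i) ^ 4 / 4 - (x i) ^ 2 / 2) + γ / 4 * ∑ i : ZMod N, (x (i + 1) - x i) ^ 2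

/-- The point `A(γ) = √(1-γ)·(1,1,-1,-1) ∈ ℝ⁴`. -/
noncomputable def ptA (γ : ℝ) : EuclideanSpace ℝ (ZMod 4) :=
  WithLp.toLp 2 (fun i : ZMod 4 => if i.val < 2 then Real.sqrt (1 - γ) else -Real.sqrt (1 - γ))

/-- The point `B(γ) = √(1-γ)·(1,0,-1,0) ∈ ℝ⁴`. -/
noncomputable def ptB (γ : ℝ) : EuclideanSpace ℝ (ZMod 4) :=
  WithLp.toLp 2 (fun i : ZMod 4 => if i = 0 then Real.sqrt (1 - γ) else if i = 2 then -Real.sqrt (1 - γ) else 0)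

/-
The partial derivatives are `∂ᵢV_γ(x) = xᵢ³ - xᵢ + (γ/2)(2xᵢ - xᵢ₊₁ - xᵢ₋₁)`: the quartic part
differentiates coordinatewise and the coupling term, after an index shift, gives the discrete
Laplacian. At both `A(γ)` and `B(γ)` the Laplacian term equals `γxᵢ` in every coordinate, so
`∂ᵢV_γ = xᵢ(xᵢ² - (1-γ))`, which vanishes because every coordinate is `0` or `±√(1-γ)`. Evaluating
directly gives `V_γ(A) = -(1-γ)²` and `V_γ(B) = -(1-γ)²/2`.
-/

section Gradient

variable {N : ℕ} [NeZero N] (γ : ℝ) (x : EuclideanSpace ℝ (ZMod N))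

local notation "π" => EuclideanSpace.proj (𝕜 := ℝ) (ι := ZMod N)

noncomputable def gradV : EuclideanSpace ℝ (ZMod N) :=
  WithLp.toLp 2 fun j => x j ^ 3 - x j + γ / 2 * (2 * x j - x (j + 1) - x (j - 1))

theorem hasFDerivAt_V :
    HasFDerivAt (V N γ)
      (∑ i, (x i ^ 3 - x i) • π i
        + (γ / 4) • ∑ i, (2 * (x (i + 1) - x i)) • (π (i + 1) - π i)) x := by
  refine (HasFDerivAt.fun_sum fun i _ => ?_).add ((HasFDerivAt.fun_sum fun i _ => ?_).const_mul _)
  · have hd : HasDerivAt (fun t : ℝ => t ^ 4 / 4 - t ^ 2 / 2) (x i ^ 3 - x i) (x i) :=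
      (((hasDerivAt_pow 4 (x i)).div_const 4).sub
        ((hasDerivAt_pow 2 (x i)).div_const 2)).congr_deriv (by push_cast; ring)
    exact hd.comp_hasFDerivAt x (π i).hasFDerivAt
  · have hd : HasDerivAt (fun t : ℝ => t ^ 2) (2 * (x (i + 1) - x i)) (x (i + 1) - x i) := by
      simpa using hasDerivAt_pow 2 (x (i + 1) - x i)
    exact hd.comp_hasFDerivAt x ((π (i + 1)).hasFDerivAt.sub (π i).hasFDerivAt)

theorem hasGradientAt_V : HasGradientAt (V N γ) (gradV γ x) x := by
  rw [hasGradientAt_iff_hasFDerivAt]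
  refine (hasFDerivAt_V γ x).congr_fderiv ?_
  ext v
  have shift : ∑ i, (x i - x (i - 1)) * v i = ∑ i, (x (i + 1) - x i) * v (i + 1) := by
    simpa using (Equiv.subRight (1 : ZMod N)).sum_comp fun i => (x (i + 1) - x i) * v (i + 1)
  have hzero : ∑ i, γ / 2 * ((x (i + 1) - x i) * v (i + 1) - (x i - x (i - 1)) * v i) = 0 := by
    rw [← Finset.mul_sum, Finset.sum_sub_distrib, shift, sub_self, mul_zero]
  simp only [add_apply, sum_apply, smul_apply, sub_apply, PiLp.proj_apply, smul_eq_mul, gradV,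
    InnerProductSpace.toDual_apply_apply, PiLp.inner_apply, RCLike.inner_apply, conj_trivial]
  rw [← sub_eq_zero, ← hzero, Finset.mul_sum, ← Finset.sum_add_distrib, ← Finset.sum_sub_distrib]
  exact Finset.sum_congr rfl fun i _ => by ring

theorem gradient_V_eq_zero_iff :
    gradient (V N γ) x = 0 ↔
      ∀ j, x j ^ 3 - x j + γ / 2 * (2 * x j - x (j + 1) - x (j - 1)) = 0 := by
  rw [(hasGradientAt_V γ x).gradient, gradV]
  simp only [WithLp.toLp_eq_zero, funext_iff, Pi.zero_apply]

end Gradient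

section FourSites

variable (γ : ℝ) (x : EuclideanSpace ℝ (ZMod 4))

theorem sum_zmod_four {M : Type*} [AddCommMonoid M] (f : ZMod 4 → M) :
    ∑ i, f i = f 0 + f 1 + f 2 + f 3 :=
  Fin.sum_univ_four f

theorem V_four :
    V 4 γ x = (x 0 ^ 4 / 4 - x 0 ^ 2 / 2) + (x 1 ^ 4 / 4 - x 1 ^ 2 / 2)
      + (x 2 ^ 4 / 4 - x 2 ^ 2 / 2) + (x 3 ^ 4 / 4 - x 3 ^ 2 / 2)
      + γ / 4 * ((x 1 - x 0) ^ 2 + (x 2 - x 1) ^ 2 + (x 3 - x 2) ^ 2 + (x 0 - x 3) ^ 2) := by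
  rw [V, sum_zmod_four, sum_zmod_four]
  rfl

theorem gradient_V_four_eq_zero_iff :
    gradient (V 4 γ) x = 0 ↔
      x 0 ^ 3 - x 0 + γ / 2 * (2 * x 0 - x 1 - x 3) = 0 ∧
      x 1 ^ 3 - x 1 + γ / 2 * (2 * x 1 - x 2 - x 0) = 0 ∧
      x 2 ^ 3 - x 2 + γ / 2 * (2 * x 2 - x 3 - x 1) = 0 ∧
      x 3 ^ 3 - x 3 + γ / 2 * (2 * x 3 - x 0 - x 2) = 0 := by
  rw [gradient_V_eq_zero_iff]
  refine ⟨fun h => ⟨h 0, h 1, h 2, h 3⟩, fun ⟨h0, h1, h2, h3⟩ j => ?_⟩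
  fin_cases j
  exacts [h0, h1, h2, h3]

theorem ptA_coords :
    ptA γ 0 = √(1 - γ) ∧ ptA γ 1 = √(1 - γ) ∧ ptA γ 2 = -√(1 - γ) ∧ ptA γ 3 = -√(1 - γ) :=
  ⟨rfl, rfl, rfl, rfl⟩

theorem ptB_coords :
    ptB γ 0 = √(1 - γ) ∧ ptB γ 1 = 0 ∧ ptB γ 2 = -√(1 - γ) ∧ ptB γ 3 = 0 :=
  ⟨rfl, rfl, rfl, rfl⟩

variable {γ}

theorem gradient_V_ptA (hγ : γ ≤ 1) : gradient (V 4 γ) (ptA γ) = 0 := by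
  have ha := sq_sqrt (sub_nonneg.2 hγ)
  obtain ⟨h0, h1, h2, h3⟩ := ptA_coords γ
  rw [gradient_V_four_eq_zero_iff, h0, h1, h2, h3]
  refine ⟨?_, ?_, ?_, ?_⟩
  · linear_combination √(1 - γ) * ha
  · linear_combination √(1 - γ) * ha
  · linear_combination -√(1 - γ) * ha
  · linear_combination -√(1 - γ) * ha

theorem gradient_V_ptB (hγ : γ ≤ 1) : gradient (V 4 γ) (ptB γ) = 0 := by
  have ha := sq_sqrt (sub_nonneg.2 hγ)
  obtain ⟨h0, h1, h2, h3⟩ := ptB_coords γ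
  rw [gradient_V_four_eq_zero_iff, h0, h1, h2, h3]
  refine ⟨?_, ?_, ?_, ?_⟩
  · linear_combination √(1 - γ) * ha
  · ring
  · linear_combination -√(1 - γ) * ha
  · ring

theorem V_ptA (hγ : γ ≤ 1) : V 4 γ (ptA γ) = -(1 - γ) ^ 2 := by
  have ha := sq_sqrt (sub_nonneg.2 hγ)
  obtain ⟨h0, h1, h2, h3⟩ := ptA_coords γ
  rw [V_four, h0, h1, h2, h3]
  linear_combination (√(1 - γ) ^ 2 - (1 - γ)) * ha

theorem V_ptB (hγ : γ ≤ 1) : V 4 γ (ptB γ) = -(1 - γ) ^ 2 / 2 := by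
  have ha := sq_sqrt (sub_nonneg.2 hγ)
  obtain ⟨h0, h1, h2, h3⟩ := ptB_coords γ
  rw [V_four, h0, h1, h2, h3]
  linear_combination ((√(1 - γ) ^ 2 - (1 - γ)) / 2) * ha

end FourSites

theorem stmt18_general (γ : ℝ) (hγ1 : γ < 1) :
    gradient (V 4 γ) (ptA γ) = 0 ∧ gradient (V 4 γ) (ptB γ) = 0 ∧
    V 4 γ (ptA γ) = -(1 - γ) ^ 2 ∧ V 4 γ (ptA γ) < V 4 γ (ptB γ) := by
  refine ⟨gradient_V_ptA hγ1.le, gradient_V_ptB hγ1.le, V_ptA hγ1.le, ?_⟩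
  rw [V_ptA hγ1.le, V_ptB hγ1.le]
  have := pow_pos (sub_pos.2 hγ1) 2
  linarith

/-- for `N = 4` and `0 < γ < 1`, `A(γ)` and `B(γ)` are stationary points of
`V_γ`, with `V_γ(A) = -(1-γ)²` and `V_γ(A) < V_γ(B)`. -/
theorem stmt18 (γ : ℝ) (hγ0 : 0 < γ) (hγ1 : γ < 1) :
    gradient (V 4 γ) (ptA γ) = 0 ∧ gradient (V 4 γ) (ptB γ) = 0 ∧
    V 4 γ (ptA γ) = -(1 - γ) ^ 2 ∧ V 4 γ (ptA γ) < V 4 γ (ptB γ) :=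
  stmt18_general γ hγ1
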